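/- arXiv:1806.02561 — 2 statements merged into one kernel-verified Lean document; each statement's English description precedes it below -/
import Mathlib

section
/- For every n ∈ ℕ, 1 ≤ p ≤ ∞, and every real sequence β̄ = (β_k), one has (1/2)‖Φ_{n,πβ_n}‖_p ≤ A_n(p) ≤ (1/2) sup_{θ ∈ ℝ} ‖Φ_{n,θ}‖_p. -/
open MeasureTheory Real Set
open scoped ENNReal

/-- The `L_p` "norm" of a (2π-periodic) function over one period `(0, 2π]`. -/
noncomputable def LpNormPer (p : ℝ≥0∞) (f : ℝ → ℝ) : ℝ :=
  (eLpNorm f p (volume.restrict (Ioc (0:ℝ) (2*π)))).toReal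

/-- `‖cos t‖_p` over one period. -/
noncomputable def cosLp (p : ℝ≥0∞) : ℝ := LpNormPer p Real.cos

/-- Admissible `φ`: 2π-periodic, integrable on a period, `φ ⊥ 1`, `‖φ‖₁ ≤ 1`. -/
def AdmPhi (φ : ℝ → ℝ) : Prop :=
  (∀ t : ℝ, φ (t + 2*π) = φ t) ∧ IntegrableOn φ (Ioc (0:ℝ) (2*π)) volume ∧
  (∫ t in (0:ℝ)..(2*π), φ t) = 0 ∧ (∫ t in (0:ℝ)..(2*π), |φ t|) ≤ 1

/-- `Φ_{n,θ}(x) = cos(nx−θ/2)(1−cos(x−θ)) − sin(nx−θ/2)sin(x−θ)`. -/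
noncomputable def PhiF (n : ℕ) (θ : ℝ) : ℝ → ℝ := fun x =>
  Real.cos ((n:ℝ)*x - θ/2) * (1 - Real.cos (x - θ)) -
    Real.sin ((n:ℝ)*x - θ/2) * Real.sin (x - θ)

/-- `A_n(p) = sup { ‖ sin((2n−1)x/2) ∫₀^{2π} sin(nt − x/2 + πβ_n/2) φ(t) dt ‖_p :
φ ⊥ 1, ‖φ‖₁ ≤ 1 }`. -/
noncomputable def Aq (n : ℕ) (p : ℝ≥0∞) (βb : ℕ → ℝ) : ℝ :=
  sSup { a : ℝ | ∃ φ : ℝ → ℝ, AdmPhi φ ∧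
    a = LpNormPer p (fun x => Real.sin ((2*(n:ℝ) - 1) * x / 2) *
          ∫ t in (0:ℝ)..(2*π), Real.sin ((n:ℝ)*t - x/2 + π * βb n / 2) * φ t) }

/-!
With `a, b` the `n`-th cosine and sine coefficients of `φ`, the inner integral in `A_n(p)` is
`a sin((θ-x)/2) + b cos((θ-x)/2) = r sin((θ-x)/2 + α)` with `r = |a + ib| ≤ ‖φ‖₁ ≤ 1`, while
`Φ_{n,θ}(x) = 2 sin((θ-x)/2) sin((2n-1)x/2)`. Hence every candidate function is `(r/2) Φ_{n,θ+2α}`,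
which gives the upper bound. For the lower bound take `φ = g / ‖g‖₁` with
`g(t) = sign(cos nt) · 1{|cos nt| ≥ c}`: it has mean zero (it is antiperiodic with antiperiod
`π/n`), its sine coefficient vanishes (it is even), and `cos(nt) g(t) ≥ c |g(t)|` pointwise, so its
cosine coefficient is at least `c`; then let `c → 1`.
-/

namespace Function

theorem Antiperiodic.intervalIntegral_eq_zero {f : ℝ → ℝ} {T c : ℝ} (hT : Periodic f T)
    (hc : Antiperiodic f c) (t : ℝ) : ∫ x in t..t + T, f x = 0 := by
  have hshift : ∫ x in t..t + T, f (x + c) = ∫ x in t..t + T, f x := by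
    rw [intervalIntegral.integral_comp_add_right, add_right_comm]
    exact hT.intervalIntegral_add_eq (t + c) t
  simp only [hc _, intervalIntegral.integral_neg] at hshift
  linarith

end Function

theorem intervalIntegral.integral_eq_zero_of_comp_sub_eq_neg {f : ℝ → ℝ} {a b : ℝ}
    (h : ∀ x, f (a + b - x) = -f x) : ∫ x in a..b, f x = 0 := by
  have hrefl := intervalIntegral.integral_comp_sub_left f (a := a) (b := b) (a + b)
  simp only [h, intervalIntegral.integral_neg, add_sub_cancel_right, add_sub_cancel_left] at hrefl
  linarith

theorem PhiF_eq_mul_sin (n : ℕ) (θ x : ℝ) :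
    PhiF n θ x = 2 * sin ((θ - x) / 2) * sin ((2 * n - 1) * x / 2) := by
  have h : PhiF n θ x = cos (n * x - θ / 2) - cos (n * x - θ / 2 - (x - θ)) := by
    rw [PhiF, cos_sub (n * x - θ / 2)]; ring
  rw [h, cos_sub_cos,
    show (θ - x) / 2 = -((n * x - θ / 2 - (n * x - θ / 2 - (x - θ))) / 2) by ring, sin_neg]
  ring_nf

theorem abs_PhiF_le (n : ℕ) (θ x : ℝ) : |PhiF n θ x| ≤ 2 := by
  rw [PhiF_eq_mul_sin, abs_mul, abs_mul, abs_two, mul_assoc]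
  linarith [mul_le_one₀ (abs_sin_le_one ((θ - x) / 2)) (abs_nonneg _)
    (abs_sin_le_one ((2 * n - 1) * x / 2))]

theorem LpNormPer_const_mul (p : ℝ≥0∞) (c : ℝ) (f : ℝ → ℝ) :
    LpNormPer p (fun x => c * f x) = |c| * LpNormPer p f := by
  rw [LpNormPer, LpNormPer, show (fun x => c * f x) = c • f from rfl, eLpNorm_const_smul,
    ENNReal.toReal_mul]
  simp

theorem bddAbove_range_LpNormPer {ι : Type*} (p : ℝ≥0∞) {f : ι → ℝ → ℝ} {C : ℝ}
    (hf : ∀ i x, |f i x| ≤ C) : BddAbove (Set.range fun i => LpNormPer p (f i)) := by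
  refine ⟨(eLpNorm (fun _ : ℝ => C) p (volume.restrict (Ioc (0:ℝ) (2*π)))).toReal, ?_⟩
  rintro _ ⟨i, rfl⟩
  refine ENNReal.toReal_mono ?_ (eLpNorm_mono_real fun x => ?_)
  · exact (memLp_const C).eLpNorm_ne_top
  · simpa using hf i x

theorem AdmPhi.intervalIntegrable {φ : ℝ → ℝ} (hφ : AdmPhi φ) :
    IntervalIntegrable φ volume 0 (2*π) :=
  (intervalIntegrable_iff_integrableOn_Ioc_of_le (by positivity)).2 hφ.2.1

noncomputable def cosCoeff (n : ℕ) (φ : ℝ → ℝ) : ℝ := ∫ t in (0:ℝ)..(2*π), cos (n * t) * φ t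

noncomputable def sinCoeff (n : ℕ) (φ : ℝ → ℝ) : ℝ := ∫ t in (0:ℝ)..(2*π), sin (n * t) * φ t

-- The function inside the `L_p` norm in `Aq`, with `θ = π β_n`.
noncomputable def kernelTransform (n : ℕ) (θ : ℝ) (φ : ℝ → ℝ) : ℝ → ℝ := fun x =>
  Real.sin ((2*(n:ℝ) - 1) * x / 2) *
    ∫ t in (0:ℝ)..(2*π), Real.sin ((n:ℝ)*t - x/2 + θ / 2) * φ t

section Coefficients

variable {n : ℕ} {φ : ℝ → ℝ}

theorem integral_cos_add_sin_mul (hφ : IntervalIntegrable φ volume 0 (2*π)) (a b : ℝ) :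
    ∫ t in (0:ℝ)..(2*π), (a * cos (n * t) + b * sin (n * t)) * φ t
      = a * cosCoeff n φ + b * sinCoeff n φ := by
  have hcos := hφ.continuousOn_mul (g := fun t => cos (n * t)) (by fun_prop)
  have hsin := hφ.continuousOn_mul (g := fun t => sin (n * t)) (by fun_prop)
  simp only [add_mul, mul_assoc]
  rw [intervalIntegral.integral_add (hcos.const_mul a) (hsin.const_mul b),
    intervalIntegral.integral_const_mul, intervalIntegral.integral_const_mul, cosCoeff, sinCoeff]

theorem kernelTransform_eq (hφ : IntervalIntegrable φ volume 0 (2*π)) (θ x : ℝ) :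
    kernelTransform n θ φ x = sin ((2 * n - 1) * x / 2) *
      (cosCoeff n φ * sin ((θ - x) / 2) + sinCoeff n φ * cos ((θ - x) / 2)) := by
  rw [kernelTransform, mul_comm (cosCoeff n φ), mul_comm (sinCoeff n φ),
    ← integral_cos_add_sin_mul hφ]
  congr 1
  refine intervalIntegral.integral_congr fun t _ => ?_
  rw [show (n:ℝ) * t - x / 2 + θ / 2 = (θ - x) / 2 + n * t by ring, sin_add]

theorem cosCoeff_mul_cos_add_sinCoeff_mul_sin_le (hφ : IntervalIntegrable φ volume 0 (2*π))
    (α : ℝ) : cosCoeff n φ * cos α + sinCoeff n φ * sin α ≤ ∫ t in (0:ℝ)..(2*π), |φ t| := by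
  rw [mul_comm, mul_comm (sinCoeff n φ), ← integral_cos_add_sin_mul hφ]
  refine intervalIntegral.integral_mono_on (by positivity)
    (hφ.continuousOn_mul (by fun_prop)) hφ.abs fun t _ => ?_
  rw [← cos_sub]
  calc cos (α - n * t) * φ t ≤ |cos (α - n * t)| * |φ t| := by
        rw [← abs_mul]; exact le_abs_self _
    _ ≤ |φ t| := mul_le_of_le_one_left (abs_nonneg _) (abs_cos_le_one _)

theorem kernelTransform_eq_of_sinCoeff_eq_zero (hφ : IntervalIntegrable φ volume 0 (2*π))
    (hsin : sinCoeff n φ = 0) (θ : ℝ) :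
    kernelTransform n θ φ = fun x => (cosCoeff n φ / 2) * PhiF n θ x := by
  funext x
  rw [kernelTransform_eq hφ, hsin, PhiF_eq_mul_sin]
  ring

theorem exists_kernelTransform_eq_mul_PhiF (hφ : AdmPhi φ) (θ : ℝ) :
    ∃ r α : ℝ, 0 ≤ r ∧ r ≤ 1 ∧
      kernelTransform n θ φ = fun x => (r / 2) * PhiF n (θ + 2 * α) x := by
  set z : ℂ := ⟨cosCoeff n φ, sinCoeff n φ⟩
  have hcos : ‖z‖ * cos z.arg = cosCoeff n φ := Complex.norm_mul_cos_arg z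
  have hsin : ‖z‖ * sin z.arg = sinCoeff n φ := Complex.norm_mul_sin_arg z
  have hnorm : ‖z‖ = cosCoeff n φ * cos z.arg + sinCoeff n φ * sin z.arg := by
    rw [← hcos, ← hsin]; linear_combination (-‖z‖) * sin_sq_add_cos_sq z.arg
  refine ⟨‖z‖, z.arg, norm_nonneg z, ?_, ?_⟩
  · rw [hnorm]
    exact (cosCoeff_mul_cos_add_sinCoeff_mul_sin_le hφ.intervalIntegrable _).trans hφ.2.2.2
  · funext x
    rw [kernelTransform_eq hφ.intervalIntegrable, PhiF_eq_mul_sin,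
      show (θ + 2 * z.arg - x) / 2 = (θ - x) / 2 + z.arg by ring, sin_add, ← hcos, ← hsin]
    ring

end Coefficients

theorem LpNormPer_kernelTransform_le {n : ℕ} {φ : ℝ → ℝ} (hφ : AdmPhi φ) (p : ℝ≥0∞) (θ : ℝ) :
    LpNormPer p (kernelTransform n θ φ) ≤ (1/2) * ⨆ θ : ℝ, LpNormPer p (PhiF n θ) := by
  obtain ⟨r, α, hr0, hr1, heq⟩ := exists_kernelTransform_eq_mul_PhiF hφ θ
  rw [heq, LpNormPer_const_mul, abs_of_nonneg (by positivity)]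
  gcongr
  · exact ENNReal.toReal_nonneg
  · exact le_ciSup (bddAbove_range_LpNormPer p (abs_PhiF_le n)) (θ + 2 * α)

theorem admPhi_zero : AdmPhi 0 :=
  ⟨fun _ => rfl, integrableOn_zero, by simp, by simp⟩

theorem Aq_le_half_iSup_LpNormPer_PhiF (n : ℕ) (p : ℝ≥0∞) (βb : ℕ → ℝ) :
    Aq n p βb ≤ (1/2) * ⨆ θ : ℝ, LpNormPer p (PhiF n θ) := by
  refine csSup_le ⟨_, 0, admPhi_zero, rfl⟩ ?_
  rintro _ ⟨φ, hφ, rfl⟩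
  exact LpNormPer_kernelTransform_le hφ p _

noncomputable def cosPeakSign (n : ℕ) (c t : ℝ) : ℝ :=
  (if c ≤ cos (n * t) then 1 else 0) - (if cos (n * t) ≤ -c then 1 else 0)

section CosPeakSign

variable {n : ℕ} {c : ℝ}

theorem abs_cosPeakSign_le_one (t : ℝ) : |cosPeakSign n c t| ≤ 1 := by
  unfold cosPeakSign; split_ifs <;> norm_num

theorem measurable_cosPeakSign : Measurable (cosPeakSign n c) := by
  unfold cosPeakSign
  refine .sub (.ite ?_ measurable_const measurable_const)
    (.ite ?_ measurable_const measurable_const)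
  · exact measurableSet_le measurable_const (by fun_prop)
  · exact measurableSet_le (by fun_prop) measurable_const

theorem intervalIntegrable_cosPeakSign (a b : ℝ) :
    IntervalIntegrable (cosPeakSign n c) volume a b :=
  (intervalIntegrable_const (c := (1:ℝ))).mono_fun' measurable_cosPeakSign.aestronglyMeasurable
    (ae_of_all _ abs_cosPeakSign_le_one)

theorem cosPeakSign_periodic : Function.Periodic (cosPeakSign n c) (2 * π) := fun t => by
  simp only [cosPeakSign, mul_add, cos_add_nat_mul_two_pi]

theorem cosPeakSign_antiperiodic (hn : n ≠ 0) :
    Function.Antiperiodic (cosPeakSign n c) (π / n) := fun t => by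
    have hcos : cos (n * (t + π / n)) = -cos (n * t) := by
      rw [mul_add, mul_div_cancel₀ _ (Nat.cast_ne_zero.2 hn), cos_add_pi]
    simp only [cosPeakSign, hcos, neg_le_neg_iff, le_neg]
    ring

theorem cosPeakSign_two_pi_sub (t : ℝ) : cosPeakSign n c (2 * π - t) = cosPeakSign n c t := by
  simp only [cosPeakSign, mul_sub, cos_nat_mul_two_pi_sub]

theorem mul_abs_cosPeakSign_le (t : ℝ) :
    c * |cosPeakSign n c t| ≤ cos (n * t) * cosPeakSign n c t := by
  unfold cosPeakSign; split_ifs <;> norm_num <;> linarith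

theorem integral_abs_cosPeakSign_pos (hn : n ≠ 0) (hc₀ : 0 ≤ c) (hc₁ : c < 1) :
    0 < ∫ t in (0:ℝ)..(2*π), |cosPeakSign n c t| := by
  rw [intervalIntegral.integral_pos_iff_support_of_nonneg_ae
    (ae_of_all _ fun t => abs_nonneg _) (intervalIntegrable_cosPeakSign 0 (2*π)).abs]
  refine ⟨by positivity, ?_⟩
  -- Near `t = π / n`, where `cos (n t) = -1 < -c`, the function is `-1`.
  set U := Ioo 0 (2*π) ∩ {t | cos (n * t) < -c}
  have hU : IsOpen U := isOpen_Ioo.inter (isOpen_lt (by fun_prop) continuous_const)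
  have hnpos : (0:ℝ) < n := Nat.cast_pos.2 (Nat.pos_of_ne_zero hn)
  have hmem : π / n ∈ U := by
    refine ⟨⟨by positivity, ?_⟩, ?_⟩
    · rw [div_lt_iff₀ hnpos]
      nlinarith [pi_pos, (Nat.one_le_cast (α := ℝ)).2 (Nat.pos_of_ne_zero hn)]
    · show cos (n * (π / n)) < -c
      rw [mul_div_cancel₀ _ hnpos.ne', cos_pi]; linarith
  refine (hU.measure_pos volume ⟨_, hmem⟩).trans_le
    (measure_mono fun t ht => ⟨?_, Ioo_subset_Ioc_self ht.1⟩)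
  have ht' : cos (n * t) < -c := ht.2
  have h1 : ¬ c ≤ cos (n * t) := by linarith
  simp [cosPeakSign, h1, ht'.le]

end CosPeakSign

/-- `cosPeakSign n c` normalised in `L₁`: as `c → 1` it concentrates at the extrema of
`cos (n t)`, so its `n`-th cosine coefficient tends to `1`. -/
noncomputable def cosPeakTest (n : ℕ) (c : ℝ) (t : ℝ) : ℝ :=
  (∫ s in (0:ℝ)..(2*π), |cosPeakSign n c s|)⁻¹ * cosPeakSign n c t

section CosPeakTest

variable {n : ℕ} {c : ℝ}

theorem admPhi_cosPeakTest (hn : n ≠ 0) (hc₀ : 0 ≤ c) (hc₁ : c < 1) :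
    AdmPhi (cosPeakTest n c) := by
  have hpos := integral_abs_cosPeakSign_pos hn hc₀ hc₁
  refine ⟨fun t => by rw [cosPeakTest, cosPeakSign_periodic t, cosPeakTest], ?_, ?_, ?_⟩
  · exact ((intervalIntegrable_cosPeakSign 0 (2*π)).const_mul _).1
  · have hmean := (cosPeakSign_antiperiodic (c := c) hn).intervalIntegral_eq_zero
      cosPeakSign_periodic 0
    rw [zero_add] at hmean
    simp only [cosPeakTest, intervalIntegral.integral_const_mul, hmean, mul_zero]
  · simp only [cosPeakTest, abs_mul, abs_inv, abs_of_pos hpos, intervalIntegral.integral_const_mul,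
      inv_mul_cancel₀ hpos.ne', le_refl]

theorem sinCoeff_cosPeakTest : sinCoeff n (cosPeakTest n c) = 0 := by
  rw [sinCoeff, intervalIntegral.integral_eq_zero_of_comp_sub_eq_neg fun t => ?_]
  rw [zero_add, cosPeakTest, cosPeakSign_two_pi_sub, cosPeakTest, mul_sub, sin_nat_mul_two_pi_sub]
  ring

theorem le_cosCoeff_cosPeakTest (hn : n ≠ 0) (hc₀ : 0 ≤ c) (hc₁ : c < 1) :
    c ≤ cosCoeff n (cosPeakTest n c) := by
  have hpos := integral_abs_cosPeakSign_pos hn hc₀ hc₁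
  have hle : c * ∫ t in (0:ℝ)..(2*π), |cosPeakSign n c t|
      ≤ ∫ t in (0:ℝ)..(2*π), cos (n * t) * cosPeakSign n c t := by
    rw [← intervalIntegral.integral_const_mul]
    exact intervalIntegral.integral_mono_on (by positivity)
      ((intervalIntegrable_cosPeakSign 0 (2*π)).abs.const_mul c)
      ((intervalIntegrable_cosPeakSign 0 (2*π)).continuousOn_mul (by fun_prop))
      fun t _ => mul_abs_cosPeakSign_le t
  simp only [cosCoeff, cosPeakTest, mul_left_comm (cos _), intervalIntegral.integral_const_mul]
  rwa [le_inv_mul_iff₀ hpos, mul_comm]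

end CosPeakTest

theorem LpNormPer_kernelTransform_le_Aq {n : ℕ} {φ : ℝ → ℝ} (hφ : AdmPhi φ) (p : ℝ≥0∞)
    (βb : ℕ → ℝ) : LpNormPer p (kernelTransform n (π * βb n) φ) ≤ Aq n p βb :=
  le_csSup ⟨_, by rintro _ ⟨ψ, hψ, rfl⟩; exact LpNormPer_kernelTransform_le hψ p _⟩ ⟨φ, hφ, rfl⟩

theorem le_of_forall_mem_Ioo_mul_le {x y : ℝ} (h : ∀ c ∈ Ioo (0:ℝ) 1, c * x ≤ y) : x ≤ y := by
  have hlim : Filter.Tendsto (fun c : ℝ => c * x) (nhdsWithin 1 (Iio 1)) (nhds x) := by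
    simpa using ((continuous_mul_const x).tendsto 1).mono_left nhdsWithin_le_nhds
  exact le_of_tendsto hlim (Filter.mem_of_superset (Ioo_mem_nhdsLT one_pos) h)

theorem half_LpNormPer_PhiF_le_Aq {n : ℕ} (hn : n ≠ 0) (p : ℝ≥0∞) (βb : ℕ → ℝ) :
    (1/2) * LpNormPer p (PhiF n (π * βb n)) ≤ Aq n p βb := by
  refine le_of_forall_mem_Ioo_mul_le fun c ⟨hc₀, hc₁⟩ => ?_
  have hcos := le_cosCoeff_cosPeakTest hn hc₀.le hc₁
  have hadm := admPhi_cosPeakTest hn hc₀.le hc₁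
  calc c * ((1/2) * LpNormPer p (PhiF n (π * βb n)))
      ≤ |cosCoeff n (cosPeakTest n c) / 2| * LpNormPer p (PhiF n (π * βb n)) := by
        rw [abs_of_nonneg (by linarith), ← mul_assoc]
        exact mul_le_mul_of_nonneg_right (by linarith) ENNReal.toReal_nonneg
    _ = LpNormPer p (kernelTransform n (π * βb n) (cosPeakTest n c)) := by
        rw [kernelTransform_eq_of_sinCoeff_eq_zero hadm.intervalIntegrable sinCoeff_cosPeakTest,
          LpNormPer_const_mul]
    _ ≤ Aq n p βb := LpNormPer_kernelTransform_le_Aq hadm p βb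

/-- **Estimate (15).** `(1/2)‖Φ_{n,πβ_n}‖_p ≤ A_n(p) ≤ (1/2) sup_{θ∈ℝ} ‖Φ_{n,θ}‖_p`. -/
theorem statement10 :
    ∀ (n : ℕ), 1 ≤ n → ∀ (p : ℝ≥0∞), 1 ≤ p → ∀ (βb : ℕ → ℝ),
      (1/2) * LpNormPer p (PhiF n (π * βb n)) ≤ Aq n p βb ∧
      Aq n p βb ≤ (1/2) * ⨆ θ : ℝ, LpNormPer p (PhiF n θ) :=
  fun n hn p _ βb => ⟨half_LpNormPer_PhiF_le_Aq (Nat.one_le_iff_ne_zero.1 hn) p βb,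
    Aq_le_half_iSup_LpNormPer_PhiF n p βb⟩
end

section
/- For every real r > 1 and every n ∈ ℕ, one has n^r Σ_{k=n+1}^∞ k^{−r} < e^{−r/(n+1)} ( 1 + (n+1)/(r−1) ). -/
/-!
Comparing the decreasing function `t ↦ t ^ (-r)` with its integral gives
`Σ_{k ≥ 0} (N + k) ^ (-r) ≤ N ^ (-r) + ∫_N^∞ t ^ (-r) dt = N ^ (-r) (1 + N / (r - 1))` for `N = n + 1`,
and `n ^ r N ^ (-r) = (1 - 1 / N) ^ r < e ^ (-r / N)` since `1 + t < e ^ t` for `t ≠ 0`.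
-/

open Set MeasureTheory Finset

namespace Real

variable {x r : ℝ}

theorem sum_range_rpow_neg_add_succ_le (hx : 0 < x) (hr : 1 < r) (m : ℕ) :
    ∑ k ∈ range m, (x + (k + 1 : ℕ)) ^ (-r) ≤ x ^ (1 - r) / (r - 1) := by
  have hanti : AntitoneOn (fun t : ℝ => t ^ (-r)) (Icc x (x + m)) :=
    fun s hs t _ hst => rpow_le_rpow_of_nonpos (hx.trans_le hs.1) hst (by linarith)
  have hint : IntegrableOn (fun t : ℝ => t ^ (-r)) (Ioi x) :=
    integrableOn_Ioi_rpow_of_lt (by linarith) hx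
  calc ∑ k ∈ range m, (x + (k + 1 : ℕ)) ^ (-r)
      ≤ ∫ t in x..x + m, t ^ (-r) := hanti.sum_le_integral
    _ = ∫ t in Ioc x (x + m), t ^ (-r) :=
        intervalIntegral.integral_of_le (le_add_of_nonneg_right m.cast_nonneg)
    _ ≤ ∫ t in Ioi x, t ^ (-r) := by
        refine setIntegral_mono_set hint ?_ (.of_forall Ioc_subset_Ioi_self)
        filter_upwards [ae_restrict_mem measurableSet_Ioi] with t ht
        exact rpow_nonneg (hx.trans ht).le _
    _ = x ^ (1 - r) / (r - 1) := by
        rw [integral_Ioi_rpow_of_lt (by linarith) hx, neg_div, ← div_neg, neg_add_eq_sub, neg_sub]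

theorem summable_rpow_neg_add_succ (hx : 0 < x) (hr : 1 < r) :
    Summable fun k : ℕ => (x + (k + 1 : ℕ)) ^ (-r) :=
  summable_of_sum_range_le (fun _ => by positivity) (sum_range_rpow_neg_add_succ_le hx hr)

theorem tsum_rpow_neg_add_le (hx : 0 < x) (hr : 1 < r) :
    ∑' k : ℕ, (x + k) ^ (-r) ≤ x ^ (-r) * (1 + x / (r - 1)) := by
  have hsum : Summable fun k : ℕ => (x + k) ^ (-r) :=
    (summable_nat_add_iff 1).1 (summable_rpow_neg_add_succ hx hr)
  have htail : ∑' k : ℕ, (x + (k + 1 : ℕ)) ^ (-r) ≤ x ^ (1 - r) / (r - 1) :=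
    tsum_le_of_sum_range_le (fun _ => by positivity) (sum_range_rpow_neg_add_succ_le hx hr)
  have hpow : x ^ (1 - r) = x ^ (-r) * x := by
    rw [sub_eq_neg_add, rpow_add hx, rpow_one]
  rw [hsum.tsum_eq_zero_add, Nat.cast_zero, add_zero]
  rw [hpow] at htail
  calc x ^ (-r) + ∑' k : ℕ, (x + (k + 1 : ℕ)) ^ (-r)
      ≤ x ^ (-r) + x ^ (-r) * x / (r - 1) := by gcongr
    _ = x ^ (-r) * (1 + x / (r - 1)) := by ring

theorem rpow_mul_add_one_rpow_neg_lt_exp (hx : 0 ≤ x) (hr : 0 < r) :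
    x ^ r * (x + 1) ^ (-r) < exp (-r / (x + 1)) := by
  have hx1 : 0 < x + 1 := by linarith
  have hbase : x / (x + 1) < exp (-1 / (x + 1)) := by
    have hne : -1 / (x + 1) ≠ 0 := div_ne_zero (by norm_num) hx1.ne'
    have hfrac : x / (x + 1) = -1 / (x + 1) + 1 := by field_simp; ring
    rw [hfrac]
    exact add_one_lt_exp hne
  calc x ^ r * (x + 1) ^ (-r) = (x / (x + 1)) ^ r := by
        rw [div_rpow hx hx1.le, rpow_neg hx1.le, div_eq_mul_inv]
    _ < exp (-1 / (x + 1)) ^ r := rpow_lt_rpow (by positivity) hbase hr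
    _ = exp (-r / (x + 1)) := by rw [← exp_mul]; ring_nf

end Real

/-- **Estimate (51).** For every `r > 1` and `n ∈ ℕ`:
`n^r Σ_{k=n+1}^∞ k^{−r} < e^{−r/(n+1)} (1 + (n+1)/(r−1))`. -/
theorem statement19 :
    ∀ (r : ℝ), 1 < r → ∀ n : ℕ, 1 ≤ n →
      (n:ℝ) ^ r * ∑' k : ℕ, ((n+1+k : ℕ) : ℝ) ^ (-r) <
        Real.exp (-r / ((n:ℝ)+1)) * (1 + ((n:ℝ)+1) / (r-1)) := by
  intro r hr n _
  have hN : (0 : ℝ) < n + 1 := by positivity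
  have htsum : ∑' k : ℕ, ((n+1+k : ℕ) : ℝ) ^ (-r) ≤ ((n:ℝ) + 1) ^ (-r) * (1 + ((n:ℝ)+1) / (r-1)) := by
    push_cast
    exact Real.tsum_rpow_neg_add_le hN hr
  have hfactor : (0 : ℝ) < 1 + ((n:ℝ)+1) / (r-1) := by
    have : 0 < r - 1 := by linarith
    positivity
  calc (n:ℝ) ^ r * ∑' k : ℕ, ((n+1+k : ℕ) : ℝ) ^ (-r)
      ≤ (n:ℝ) ^ r * (((n:ℝ) + 1) ^ (-r) * (1 + ((n:ℝ)+1) / (r-1))) := by gcongr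
    _ = ((n:ℝ) ^ r * ((n:ℝ) + 1) ^ (-r)) * (1 + ((n:ℝ)+1) / (r-1)) := by ring
    _ < Real.exp (-r / ((n:ℝ)+1)) * (1 + ((n:ℝ)+1) / (r-1)) := by
        gcongr
        exact Real.rpow_mul_add_one_rpow_neg_lt_exp n.cast_nonneg (by linarith)
end
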